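/- Reverse bump comparison: under ratio bounds $\big(\iint_{Q^\ell\times P}\omega^{ps}\big)^{1/(ps)}\le C 2^{\ell(\alpha-n/s)\mu_\omega}\big(\iint_{Q\times P}\omega^{ps}\big)^{1/(ps)}$ and $\big(\iint_{Q^\ell\times P}\sigma^{-pr/(p-1)}\big)^{(p-1)/(pr)}\le C 2^{\ell(\alpha-n/r)\lambda_\sigma}\big(\iint_{Q\times P}\sigma^{-pr/(p-1)}\big)^{(p-1)/(pr)}$, with $\lambda_\omega+\lambda_\sigma\ge1$ and $\alpha\le n/r$, one obtains $\mathbf{A}_{pr}^{\alpha\beta}[Q^\ell\times P](\omega,\sigma)\le C'\,2^{\ell\gamma_\omega}\,\mathbf{A}_{ps}^{\alpha\beta}[Q\times P](\omega,\sigma)$ with $\gamma_\omega=(\mu_\omega-\lambda_\omega)(\alpha-n/r)+n(1/r-1/s)(\mu_\omega-1/p)$. -/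

import Mathlib

open MeasureTheory ENNReal Set

noncomputable section

abbrev En (n : ℕ) : Type := EuclideanSpace ℝ (Fin n)

/-- The cube in `ℝⁿ` with center `c` and half side-length `h`. -/
def cube {n : ℕ} (c : En n) (h : ℝ) : Set (En n) := {x | ∀ i, |x i - c i| ≤ h}

/-- The dyadic cone `Γ_ℓ(x,y) = {(u,v) : 2^{-ℓ} ≤ |x-u|/|y-v| < 2^{-ℓ+1}}`. -/
def cone {n m : ℕ} (ℓ : ℤ) (x : En n) (y : En m) : Set (En n × En m) :=
  {z | z.2 ≠ y ∧ (2:ℝ) ^ (-ℓ) ≤ ‖x - z.1‖ / ‖y - z.2‖ ∧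
        ‖x - z.1‖ / ‖y - z.2‖ < (2:ℝ) ^ (-ℓ + 1)}

/-- The strong fractional integral kernel `|x-u|^{α-n} |y-v|^{β-m}`. -/
def kern {n m : ℕ} (α β : ℝ) (x : En n) (y : En m) (z : En n × En m) : ℝ≥0∞ :=
  ENNReal.ofReal (‖x - z.1‖ ^ (α - (n:ℝ)) * ‖y - z.2‖ ^ (β - (m:ℝ)))

/-- The strong fractional integral `I_{αβ} f`. -/
def Iab {n m : ℕ} (α β : ℝ) (f : En n × En m → ℝ≥0∞) (x : En n) (y : En m) : ℝ≥0∞ :=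
  ∫⁻ z, f z * kern α β x y z

/-- The cone piece `Δ_ℓ I_{αβ} f`. -/
def DeltaI {n m : ℕ} (α β : ℝ) (ℓ : ℤ) (f : En n × En m → ℝ≥0∞) (x : En n) (y : En m) : ℝ≥0∞ :=
  ∫⁻ z in cone ℓ x y, f z * kern α β x y z

/-- The one-parameter fractional integral of order `α+β` on `ℝ^{n+m}`. -/
def Ione {n m : ℕ} (α β : ℝ) (g : En n × En m → ℝ≥0∞) (x : En n) (y : En m) : ℝ≥0∞ :=
  ∫⁻ z, g z * ENNReal.ofReal ((‖x - z.1‖ ^ 2 + ‖y - z.2‖ ^ 2) ^ ((α + β - (n:ℝ) - (m:ℝ)) / 2))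

/-- `B_{pr}[R](ω,σ)`. -/
def Bloc {n m : ℕ} (p r : ℝ) (ω σ : En n × En m → ℝ≥0∞) (R : Set (En n × En m)) : ℝ≥0∞ :=
  (∫⁻ z in R, ω z ^ (p * r)) ^ (1 / (p * r)) *
  (∫⁻ z in R, (σ z)⁻¹ ^ (p * r / (p - 1))) ^ ((p - 1) / (p * r))

/-- `A_{pr}^{αβ}[Q × P](ω,σ)`. -/
def Aloc (n m : ℕ) (α β p r : ℝ) (ω σ : En n × En m → ℝ≥0∞)
    (Q : Set (En n)) (P : Set (En m)) : ℝ≥0∞ :=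
  volume Q ^ (α / n - 1 / r) * volume P ^ (β / m - 1 / r) * Bloc p r ω σ (Q ×ˢ P)

/-- The multi-parameter `r`-bump characteristic `A_{pr}^{αβ}(ω,σ)`. -/
def Abump (n m : ℕ) (α β p r : ℝ) (ω σ : En n × En m → ℝ≥0∞) : ℝ≥0∞ :=
  ⨆ (cQ : En n) (a : ℝ) (_ : 0 < a) (cP : En m) (b : ℝ) (_ : 0 < b),
    Aloc n m α β p r ω σ (cube cQ a) (cube cP b)

/-- The bump characteristic restricted to eccentricity `|Q|^{1/n}/|P|^{1/m} = 2^{-ℓ}`,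
i.e. rectangles whose `Q`-side is `2^{-ℓ}` times the `P`-side. -/
def AbumpEcc (n m : ℕ) (α β p r : ℝ) (ω σ : En n × En m → ℝ≥0∞) (ℓ : ℤ) : ℝ≥0∞ :=
  ⨆ (cQ : En n) (a : ℝ) (_ : 0 < a) (cP : En m) (b : ℝ) (_ : 0 < b)
    (_ : a = (2:ℝ) ^ (-ℓ) * b),
    Aloc n m α β p r ω σ (cube cQ a) (cube cP b)

/-- Normalized (averaged) localized bump quantity `A_{qr}^{αβ}[R](ω,σ)`. -/
def AlocN (n m : ℕ) (α β q r : ℝ) (ω σ : En n × En m → ℝ≥0∞)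
    (Q : Set (En n)) (P : Set (En m)) : ℝ≥0∞ :=
  volume Q ^ (α / n) * volume P ^ (β / m) *
  ((volume (Q ×ˢ P))⁻¹ * ∫⁻ z in Q ×ˢ P, ω z ^ (q * r)) ^ (1 / (q * r)) *
  ((volume (Q ×ˢ P))⁻¹ * ∫⁻ z in Q ×ˢ P, (σ z)⁻¹ ^ (q * r / (q - 1))) ^ ((q - 1) / (q * r))

/-!
Hölder's inequality raises the `ω`-integral over `Q^ℓ × P` from exponent `pr` to `ps`, and the
`σ⁻¹`-integral over `Q × P` from `pr/(p-1)` to `ps/(p-1)`. The two measure factors this costs,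
`|Q^ℓ × P|^{(1/r-1/s)/p}` and `|Q × P|^{(1/r-1/s)(p-1)/p}`, turn the normalisation
`|·|^{α/n-1/r} |P|^{β/m-1/r}` of `A_{pr}` into that of `A_{ps}`, while the ratio bounds move the
remaining integrals from `Q^ℓ × P` to `Q × P`. Since `|Q^ℓ| = 2^{-ℓn} |Q|`, only a power of `2`
is left, and its exponent falls short of `ℓ γ_ω` by `ℓ (n/r - α)(λ_ω + λ_σ - 1) ≥ 0`.
-/

lemma volume_cube {n : ℕ} (c : En n) (h : ℝ) :
    volume (cube c h) = ENNReal.ofReal (2 * h) ^ n := by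
  have hpi : cube c h = (MeasurableEquiv.toLp 2 (Fin n → ℝ)).symm ⁻¹'
      Set.univ.pi fun i => Icc (c i - h) (c i + h) := by
    ext x
    refine forall_congr' fun i => ?_
    change |x i - c i| ≤ h ↔ i ∈ univ → c i - h ≤ x i ∧ x i ≤ c i + h
    simp only [abs_sub_le_iff, mem_univ, forall_const]
    constructor <;> intro hx <;> constructor <;> linarith [hx.1, hx.2]
  rw [hpi, (EuclideanSpace.volume_preserving_symm_measurableEquiv_toLp (Fin n)).measure_preimage
    (MeasurableSet.univ_pi fun i => measurableSet_Icc).nullMeasurableSet, volume_pi_pi]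
  simp [Real.volume_Icc, show ∀ i, c i + h - (c i - h) = 2 * h from fun i => by ring]

lemma volume_cube_ne_zero {n : ℕ} (c : En n) {h : ℝ} (hh : 0 < h) : volume (cube c h) ≠ 0 := by
  simp [volume_cube, hh]

lemma volume_cube_ne_top {n : ℕ} (c : En n) (h : ℝ) : volume (cube c h) ≠ ⊤ := by
  simpa only [volume_cube] using ENNReal.pow_ne_top ENNReal.ofReal_ne_top

lemma volume_cube_two_zpow_mul {n : ℕ} (c : En n) (ℓ : ℤ) (h : ℝ) :
    volume (cube c ((2 : ℝ) ^ (-ℓ) * h)) = 2 ^ (-(ℓ : ℝ) * n) * volume (cube c h) := by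
  rw [volume_cube, volume_cube, mul_left_comm, ENNReal.ofReal_mul (by positivity), mul_pow,
    ← Real.rpow_intCast, ← ENNReal.ofReal_rpow_of_pos two_pos, ENNReal.ofReal_ofNat,
    ← ENNReal.rpow_natCast, ← ENNReal.rpow_mul]
  push_cast
  ring_nf

lemma lintegral_rpow_rpow_le {X : Type*} [MeasurableSpace X] (μ : Measure X) {g : X → ℝ≥0∞}
    (hg : AEMeasurable g μ) {t u : ℝ} (ht : 0 < t) (htu : t ≤ u) :
    (∫⁻ x, g x ^ t ∂μ) ^ (1 / t) ≤ (∫⁻ x, g x ^ u ∂μ) ^ (1 / u) * μ univ ^ (1 / t - 1 / u) := by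
  simpa [eLpNorm'_eq_lintegral_enorm] using
    eLpNorm'_le_eLpNorm'_mul_rpow_measure_univ ht htu hg.aestronglyMeasurable

lemma Bloc_le_of_ratio_bounds {n m : ℕ} {p r s : ℝ} (hp : 1 < p) (hr : 0 < r) (hrs : r ≤ s)
    {ω σ : En n × En m → ℝ≥0∞} (hω : Measurable ω) (hσ : Measurable σ)
    {R' R : Set (En n × En m)} {K₁ K₂ : ℝ≥0∞}
    (hωR : (∫⁻ z in R', ω z ^ (p * s)) ^ (1 / (p * s)) ≤
      K₁ * (∫⁻ z in R, ω z ^ (p * s)) ^ (1 / (p * s)))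
    (hσR : (∫⁻ z in R', (σ z)⁻¹ ^ (p * r / (p - 1))) ^ ((p - 1) / (p * r)) ≤
      K₂ * (∫⁻ z in R, (σ z)⁻¹ ^ (p * r / (p - 1))) ^ ((p - 1) / (p * r))) :
    Bloc p r ω σ R' ≤ K₁ * K₂ * volume R' ^ ((1 / r - 1 / s) / p) *
      volume R ^ ((1 / r - 1 / s) * (p - 1) / p) * Bloc p s ω σ R := by
  have hp₀ : 0 < p - 1 := sub_pos.2 hp
  have hω' := lintegral_rpow_rpow_le (volume.restrict R') hω.aemeasurable
    (t := p * r) (u := p * s) (by positivity) (by gcongr)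
  have hσ' := lintegral_rpow_rpow_le (volume.restrict R) hσ.inv.aemeasurable
    (t := p * r / (p - 1)) (u := p * s / (p - 1)) (by positivity) (by gcongr)
  rw [Measure.restrict_apply_univ, show 1 / (p * r) - 1 / (p * s) = (1 / r - 1 / s) / p by ring]
    at hω'
  rw [Measure.restrict_apply_univ, one_div_div, one_div_div,
    show (p - 1) / (p * r) - (p - 1) / (p * s) = (1 / r - 1 / s) * (p - 1) / p by ring] at hσ'
  unfold Bloc
  calc _ ≤ K₁ * (∫⁻ z in R, ω z ^ (p * s)) ^ (1 / (p * s)) * volume R' ^ ((1 / r - 1 / s) / p) *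
        (K₂ * ((∫⁻ z in R, (σ z)⁻¹ ^ (p * s / (p - 1))) ^ ((p - 1) / (p * s)) *
          volume R ^ ((1 / r - 1 / s) * (p - 1) / p))) := by
        gcongr
        exacts [hω'.trans (by gcongr), hσR.trans (by gcongr; exact hσ')]
    _ = _ := by ring

lemma Aloc_le_of_ratio_bounds {n m : ℕ} {α β p r s : ℝ} (hp : 1 < p) (hr : 0 < r) (hrs : r ≤ s)
    {ω σ : En n × En m → ℝ≥0∞} (hω : Measurable ω) (hσ : Measurable σ)
    {Q' Q : Set (En n)} {P : Set (En m)} {κ K₁ K₂ : ℝ≥0∞} (hQ' : volume Q' = κ * volume Q)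
    (hκ₀ : κ ≠ 0) (hκ : κ ≠ ⊤) (hQ₀ : volume Q ≠ 0) (hQ : volume Q ≠ ⊤)
    (hP₀ : volume P ≠ 0) (hP : volume P ≠ ⊤)
    (hωR : (∫⁻ z in Q' ×ˢ P, ω z ^ (p * s)) ^ (1 / (p * s)) ≤
      K₁ * (∫⁻ z in Q ×ˢ P, ω z ^ (p * s)) ^ (1 / (p * s)))
    (hσR : (∫⁻ z in Q' ×ˢ P, (σ z)⁻¹ ^ (p * r / (p - 1))) ^ ((p - 1) / (p * r)) ≤
      K₂ * (∫⁻ z in Q ×ˢ P, (σ z)⁻¹ ^ (p * r / (p - 1))) ^ ((p - 1) / (p * r))) :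
    Aloc n m α β p r ω σ Q' P ≤
      K₁ * K₂ * κ ^ (α / n - 1 / r + (1 / r - 1 / s) / p) * Aloc n m α β p s ω σ Q P := by
  have hexp : ∀ x : ℝ, x - 1 / r + (1 / r - 1 / s) / p + (1 / r - 1 / s) * (p - 1) / p =
      x - 1 / s := fun x => by field_simp; ring
  unfold Aloc
  calc _ ≤ volume Q' ^ (α / n - 1 / r) * volume P ^ (β / m - 1 / r) *
        (K₁ * K₂ * volume (Q' ×ˢ P) ^ ((1 / r - 1 / s) / p) *
          volume (Q ×ˢ P) ^ ((1 / r - 1 / s) * (p - 1) / p) * Bloc p s ω σ (Q ×ˢ P)) := by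
        gcongr
        exact Bloc_le_of_ratio_bounds hp hr hrs hω hσ hωR hσR
    _ = K₁ * K₂ * κ ^ (α / n - 1 / r + (1 / r - 1 / s) / p) *
        (volume Q ^ (α / n - 1 / r + (1 / r - 1 / s) / p + (1 / r - 1 / s) * (p - 1) / p) *
          volume P ^ (β / m - 1 / r + (1 / r - 1 / s) / p + (1 / r - 1 / s) * (p - 1) / p) *
          Bloc p s ω σ (Q ×ˢ P)) := by
        simp only [Measure.volume_eq_prod, Measure.prod_prod] at hQ' ⊢
        rw [hQ', ENNReal.mul_rpow_of_ne_top (ENNReal.mul_ne_top hκ hQ) hP,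
          ENNReal.mul_rpow_of_ne_top hQ hP]
        simp only [ENNReal.mul_rpow_of_ne_top hκ hQ, ENNReal.rpow_add _ _ hκ₀ hκ,
          ENNReal.rpow_add _ _ hQ₀ hQ, ENNReal.rpow_add _ _ hP₀ hP]
        ring
    _ = _ := by rw [hexp, hexp]

lemma reverse_bump_exponent_le {n α p r s ℓ lω lσ μω : ℝ} (hn : n ≠ 0) (hℓ : 0 ≤ ℓ)
    (hαr : α ≤ n / r) (hl : 1 ≤ lω + lσ) :
    ℓ * (α - n / s) * μω + ℓ * (α - n / r) * lσ + -ℓ * n * (α / n - 1 / r + (1 / r - 1 / s) / p)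
      ≤ ℓ * ((μω - lω) * (α - n / r) + n * (1 / r - 1 / s) * (μω - 1 / p)) := by
  have hgap : ℓ * ((μω - lω) * (α - n / r) + n * (1 / r - 1 / s) * (μω - 1 / p)) -
      (ℓ * (α - n / s) * μω + ℓ * (α - n / r) * lσ +
        -ℓ * n * (α / n - 1 / r + (1 / r - 1 / s) / p)) =
      ℓ * ((n / r - α) * (lω + lσ - 1)) := by
    field_simp
    ring
  linarith [mul_nonneg hℓ (mul_nonneg (sub_nonneg.2 hαr) (sub_nonneg.2 hl))]

theorem stmt15_general (n m : ℕ) (hn : 0 < n) (α β p r s : ℝ)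
    (hp : 1 < p) (hr : 1 < r) (hrs : r < s) (hαr : α ≤ n / r)
    (ω σ : En n × En m → ℝ≥0∞) (hω : Measurable ω) (hσ : Measurable σ)
    (C : ℝ≥0∞) (hC : C ≠ ⊤) :
    ∃ C' : ℝ≥0∞, C' ≠ ⊤ ∧
      ∀ (cQ : En n) (a : ℝ) (_ : 0 < a) (cP : En m) (b : ℝ) (_ : 0 < b)
        (ℓ : ℤ) (_ : 0 < ℓ) (lω lσ μω : ℝ)
        (_ : lω ∈ Icc (0:ℝ) 1) (_ : lσ ∈ Icc (0:ℝ) 1) (_ : μω ∈ Icc (0:ℝ) 1)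
        (_ : 1 ≤ lω + lσ),
        ((∫⁻ z in cube cQ ((2:ℝ) ^ (-ℓ) * a) ×ˢ cube cP b, ω z ^ (p * s)) ^ (1 / (p * s)) ≤
          C * (2:ℝ≥0∞) ^ ((ℓ:ℝ) * (α - n / s) * μω) *
            (∫⁻ z in cube cQ a ×ˢ cube cP b, ω z ^ (p * s)) ^ (1 / (p * s))) →
        ((∫⁻ z in cube cQ ((2:ℝ) ^ (-ℓ) * a) ×ˢ cube cP b,
              (σ z)⁻¹ ^ (p * r / (p - 1))) ^ ((p - 1) / (p * r)) ≤
          C * (2:ℝ≥0∞) ^ ((ℓ:ℝ) * (α - n / r) * lσ) *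
            (∫⁻ z in cube cQ a ×ˢ cube cP b,
              (σ z)⁻¹ ^ (p * r / (p - 1))) ^ ((p - 1) / (p * r))) →
        Aloc n m α β p r ω σ (cube cQ ((2:ℝ) ^ (-ℓ) * a)) (cube cP b) ≤
          C' * (2:ℝ≥0∞) ^ ((ℓ:ℝ) *
              ((μω - lω) * (α - n / r) + n * (1 / r - 1 / s) * (μω - 1 / p))) *
            Aloc n m α β p s ω σ (cube cQ a) (cube cP b) := by
  refine ⟨C * C, ENNReal.mul_ne_top hC hC, ?_⟩
  intro cQ a ha cP b hb ℓ hℓ lω lσ μω _ _ _ hl hωR hσR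
  have two_rpow_ne_zero (x : ℝ) : (2 : ℝ≥0∞) ^ x ≠ 0 := by simp
  have two_rpow_ne_top (x : ℝ) : (2 : ℝ≥0∞) ^ x ≠ ⊤ := by simp
  calc _ ≤ C * 2 ^ ((ℓ : ℝ) * (α - n / s) * μω) * (C * 2 ^ ((ℓ : ℝ) * (α - n / r) * lσ)) *
        (2 ^ (-(ℓ : ℝ) * n)) ^ (α / n - 1 / r + (1 / r - 1 / s) / p) *
        Aloc n m α β p s ω σ (cube cQ a) (cube cP b) :=
      Aloc_le_of_ratio_bounds hp (by linarith) hrs.le hω hσ (volume_cube_two_zpow_mul cQ ℓ a)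
        (two_rpow_ne_zero _) (two_rpow_ne_top _) (volume_cube_ne_zero cQ ha)
        (volume_cube_ne_top cQ a) (volume_cube_ne_zero cP hb) (volume_cube_ne_top cP b) hωR hσR
    _ = C * C * 2 ^ ((ℓ : ℝ) * (α - n / s) * μω + (ℓ : ℝ) * (α - n / r) * lσ +
          -(ℓ : ℝ) * n * (α / n - 1 / r + (1 / r - 1 / s) / p)) *
        Aloc n m α β p s ω σ (cube cQ a) (cube cP b) := by
      rw [← ENNReal.rpow_mul, ENNReal.rpow_add _ _ two_ne_zero ENNReal.ofNat_ne_top,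
        ENNReal.rpow_add _ _ two_ne_zero ENNReal.ofNat_ne_top]
      ring
    _ ≤ _ := by
      gcongr
      · exact one_le_two
      · exact reverse_bump_exponent_le (by exact_mod_cast hn.ne') (by exact_mod_cast hℓ.le) hαr hl

/-- Reverse bump comparison: from the ratio bounds on `ω` (at exponent `ps`, with
`μ_ω`) and on `σ⁻¹` (at exponent `pr/(p-1)`, with `λ_σ`), together with
`λ_ω + λ_σ ≥ 1` and `α ≤ n/r`, one gets
`A_{pr}^{αβ}[Q^ℓ × P] ≤ C' 2^{ℓγ_ω} A_{ps}^{αβ}[Q × P]` with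
`γ_ω = (μ_ω-λ_ω)(α-n/r) + n(1/r-1/s)(μ_ω-1/p)`. -/
theorem stmt15 (n m : ℕ) (hn : 0 < n) (hm : 0 < m) (α β p r s : ℝ)
    (hp : 1 < p) (hr : 1 < r) (hrs : r < s) (hα0 : 0 < α) (hαr : α ≤ n / r)
    (hβ0 : 0 < β) (hβm : β < m)
    (ω σ : En n × En m → ℝ≥0∞) (hω : Measurable ω) (hσ : Measurable σ)
    (C : ℝ≥0∞) (hC0 : 0 < C) (hC : C ≠ ⊤) :
    ∃ C' : ℝ≥0∞, C' ≠ ⊤ ∧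
      ∀ (cQ : En n) (a : ℝ) (_ : 0 < a) (cP : En m) (b : ℝ) (_ : 0 < b)
        (ℓ : ℤ) (_ : 0 < ℓ) (lω lσ μω : ℝ)
        (_ : lω ∈ Icc (0:ℝ) 1) (_ : lσ ∈ Icc (0:ℝ) 1) (_ : μω ∈ Icc (0:ℝ) 1)
        (_ : 1 ≤ lω + lσ),
        ((∫⁻ z in cube cQ ((2:ℝ) ^ (-ℓ) * a) ×ˢ cube cP b, ω z ^ (p * s)) ^ (1 / (p * s)) ≤
          C * (2:ℝ≥0∞) ^ ((ℓ:ℝ) * (α - n / s) * μω) *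
            (∫⁻ z in cube cQ a ×ˢ cube cP b, ω z ^ (p * s)) ^ (1 / (p * s))) →
        ((∫⁻ z in cube cQ ((2:ℝ) ^ (-ℓ) * a) ×ˢ cube cP b,
              (σ z)⁻¹ ^ (p * r / (p - 1))) ^ ((p - 1) / (p * r)) ≤
          C * (2:ℝ≥0∞) ^ ((ℓ:ℝ) * (α - n / r) * lσ) *
            (∫⁻ z in cube cQ a ×ˢ cube cP b,
              (σ z)⁻¹ ^ (p * r / (p - 1))) ^ ((p - 1) / (p * r))) →
        Aloc n m α β p r ω σ (cube cQ ((2:ℝ) ^ (-ℓ) * a)) (cube cP b) ≤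
          C' * (2:ℝ≥0∞) ^ ((ℓ:ℝ) *
              ((μω - lω) * (α - n / r) + n * (1 / r - 1 / s) * (μω - 1 / p))) *
            Aloc n m α β p s ω σ (cube cQ a) (cube cP b) :=
  stmt15_general n m hn α β p r s hp hr hrs hαr ω σ hω hσ C hC
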